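/- Let f_y be a choice function for the variable y depending on variables v_1,…,v_t and x, and suppose the choice function f_x for x depends only on variables u_1,…,u_s with {u_1,…,u_s} ⊆ {v_1,…,v_t}. Then the composite function g_y(v_1,…,v_t) := f_y(v_1,…,v_t, f_x(u_1,…,u_s)) is a well-defined choice function for y depending only on v_1,…,v_t, and any play of the semantic game in which Éloïse uses f_x for x and g_y for y produces the same outcomes as using f_x for x and f_y for y; hence a winning strategy for Éloïse in G(φ^{y←x},M) induces one in G(φ,M) whenever every variable visible to x is visible to y. -/

import Mathlib

/-! Core model of prenex IF sentences and their imperfect-information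
game semantics.

A quantifier prefix is a list of triples `(isUniversal, variable, slash set)`.
A (prenex) IF sentence is such a prefix together with a quantifier-free
matrix `QF` interpreted in a structure `(M, I)`.  A strategy assigns to each
quantifier position a choice function on assignments; admissibility says the
choice function only depends on the variables visible at that position
(the superordinated variables minus the slash set).  Truth = existence of a
winning strategy for Éloïse, falsity = for Abélard. -/

abbrev Var := ℕ
abbrev Quant := Bool × Var × Finset Var   -- (isUniversal?, variable, slash set)
abbrev QPrefix := List Quant

def qUniv (Q : QPrefix) (i : ℕ) : Prop := (Q.getD i default).1 = true
def qvar (Q : QPrefix) (i : ℕ) : Var := (Q.getD i default).2.1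
def qslash (Q : QPrefix) (i : ℕ) : Finset Var := (Q.getD i default).2.2

/-- variables quantified superordinated to position `i`. -/
def varsBefore (Q : QPrefix) (i : ℕ) : Finset Var :=
  ((Q.take i).map (fun q => q.2.1)).toFinset

/-- the variables visible at position `i`. -/
def visible (Q : QPrefix) (i : ℕ) : Finset Var := varsBefore Q i \ qslash Q i

def agreeOn {M : Type*} (s t : Var → M) (A : Finset Var) : Prop :=
  ∀ v ∈ A, s v = t v

/-- A (pure) strategy: a choice function for every quantifier position. -/
abbrev Strat (M : Type*) := ℕ → (Var → M) → M

/-- Admissibility of an Éloïse strategy: at each existential position its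
choice function depends only on the visible variables. -/
def EAdmissible {M : Type*} (Q : QPrefix) (σ : Strat M) : Prop :=
  ∀ i, i < Q.length → ¬ qUniv Q i →
    ∀ s t : Var → M, agreeOn s t (visible Q i) → σ i s = σ i t

/-- Admissibility of an Abélard strategy (dually, at universal positions). -/
def AAdmissible {M : Type*} (Q : QPrefix) (τ : Strat M) : Prop :=
  ∀ i, i < Q.length → qUniv Q i →
    ∀ s t : Var → M, agreeOn s t (visible Q i) → τ i s = τ i t

/-- The terminal assignment of the play where Éloïse follows `σ` and
Abélard follows `τ`. -/
def outcome {M : Type*} (σ τ : Strat M) : QPrefix → ℕ → (Var → M) → (Var → M)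
  | [], _, s => s
  | q :: rest, i, s =>
      outcome σ τ rest (i + 1)
        (Function.update s q.2.1 (if q.1 then τ i s else σ i s))

/-- Quantifier-free matrices (atomic and negated atomic formulas, ∧, ∨). -/
inductive QF where
  | rel  : ℕ → List Var → QF
  | nrel : ℕ → List Var → QF
  | eq   : Var → Var → QF
  | neq  : Var → Var → QF
  | and  : QF → QF → QF
  | or   : QF → QF → QF

def QF.eval {M : Type*} (I : ℕ → List M → Prop) (s : Var → M) : QF → Prop
  | rel r ts => I r (ts.map s)
  | nrel r ts => ¬ I r (ts.map s)
  | eq a b => s a = s b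
  | neq a b => s a ≠ s b
  | and φ ψ => φ.eval I s ∧ ψ.eval I s
  | or φ ψ => φ.eval I s ∨ ψ.eval I s

/-- Truth of the prenex IF sentence `Q⃗ψ` in the structure `(M, I)`:
Éloïse has a winning strategy in the semantic game. -/
def TrueIn (M : Type*) (I : ℕ → List M → Prop) (Q : QPrefix) (ψ : QF) : Prop :=
  ∃ σ : Strat M, EAdmissible Q σ ∧
    ∀ τ : Strat M, ∀ s₀ : Var → M, ψ.eval I (outcome σ τ Q 0 s₀)

/-- Falsity: Abélard has a winning strategy. -/
def FalseIn (M : Type*) (I : ℕ → List M → Prop) (Q : QPrefix) (ψ : QF) : Prop :=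
  ∃ τ : Strat M, AAdmissible Q τ ∧
    ∀ σ : Strat M, ∀ s₀ : Var → M, ¬ ψ.eval I (outcome σ τ Q 0 s₀)

/-- `φ^{y←x}`: remove `x` from the slash set of the quantifier at position `j`. -/
def removeSlash (Q : QPrefix) (j : ℕ) (x : Var) : QPrefix :=
  Q.set j ((Q.getD j default).1, (Q.getD j default).2.1,
    (Q.getD j default).2.2.erase x)

/-- An I∃∃ declaration of independence: position `iy` (existential) declares
independence from the existential position `ix` superordinated to it. -/
def IEE (Q : QPrefix) (ix iy : ℕ) : Prop :=
  ix < iy ∧ iy < Q.length ∧ ¬ qUniv Q ix ∧ ¬ qUniv Q iy ∧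
    qvar Q ix ∈ qslash Q iy

/-- Sameness of (three-valued) truth values on `(M,I)`. -/
def SameTV (M : Type*) (I : ℕ → List M → Prop) (Q Q' : QPrefix) (ψ : QF) : Prop :=
  (TrueIn M I Q ψ ↔ TrueIn M I Q' ψ) ∧ (FalseIn M I Q ψ ↔ FalseIn M I Q' ψ)

/-- Relevance of the I∃∃ at `(ix, iy)` in `Q⃗`: some sentence beginning with
`Q⃗` changes its truth value on some structure when the declaration of
independence is removed. -/
def Relevant (Q : QPrefix) (ix iy : ℕ) : Prop :=
  ∃ (R : QPrefix) (ψ : QF) (M : Type) (I : ℕ → List M → Prop),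
    ¬ SameTV M I (Q ++ R) (removeSlash Q iy (qvar Q ix) ++ R) ψ

/-- A broken signalling sequence
`((∀v_k/V_k),(∃v_{k-1}/V_{k-1}),…,(∃v_1/V_1),(∃x/X),(∃y/Y))` in `Q⃗`,
ending with positions `ix` (of `x`) and `iy` (of `y`); `l = [i_1, …, i_k]`
lists the positions of `v_1, …, v_k`. -/
def BrokenSignalling (Q : QPrefix) (ix iy : ℕ) : Prop :=
  ∃ l : List ℕ, l ≠ [] ∧
    l.head! < ix ∧ qvar Q l.head! ∉ qslash Q ix ∧
    List.Chain' (fun a b => b < a ∧ qvar Q b ∉ qslash Q a) l ∧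
    (∀ i ∈ l.dropLast, ¬ qUniv Q i) ∧
    qUniv Q l.getLast! ∧
    (∀ i ∈ l, qvar Q i ∈ qslash Q iy)

/-! In `φ^{y←x}` the choice for `y` may read `x`; the composite strategy feeds it Éloïse's
own choice for `x`, recomputed from the current assignment. This is legal in `φ` because the
choice for `x` reads only variables visible to `x`, hence visible to `y`. It produces the same
plays: the variables visible to `x`, and `x` itself, are all bound once `x` is chosen and, the
prefix being regular, never rebound afterwards, so when `y` is reached `x` still holds exactly
the recomputed value. -/

section Prefix

variable {Q : QPrefix} {i j : ℕ}

lemma qvar_eq_getElem (h : i < Q.length) : qvar Q i = Q[i].2.1 := by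
  rw [qvar, List.getD_eq_getElem _ _ h]

lemma qUniv_iff_getElem (h : i < Q.length) : qUniv Q i ↔ Q[i].1 = true := by
  rw [qUniv, List.getD_eq_getElem _ _ h]

lemma varsBefore_mono (h : i ≤ j) : varsBefore Q i ⊆ varsBefore Q j := by
  intro v hv
  simp only [varsBefore, List.mem_toFinset] at hv ⊢
  exact List.map_subset _ (List.take_subset_take_left _ h) hv

lemma qvar_mem_varsBefore (hij : i < j) (hi : i < Q.length) : qvar Q i ∈ varsBefore Q j := by
  rw [varsBefore, List.mem_toFinset, qvar_eq_getElem hi]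
  exact List.mem_map_of_mem (List.mem_take_iff_getElem.mpr ⟨i, by omega, rfl⟩)

lemma qvar_not_mem_varsBefore (hreg : (Q.map (fun q => q.2.1)).Nodup) (hij : i ≤ j)
    (hj : j < Q.length) : qvar Q j ∉ varsBefore Q i := by
  rw [varsBefore, List.mem_toFinset, qvar_eq_getElem hj]
  intro hmem
  obtain ⟨q, hq, hqj⟩ := List.mem_map.mp hmem
  obtain ⟨k, hk, rfl⟩ := List.mem_take_iff_getElem.mp hq
  have hkj : k = j := by
    simpa using (hreg.getElem_inj_iff (hi := by simp; omega) (hj := by simpa using hj)).mp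
      (by simpa using hqj)
  omega

end Prefix

section RemoveSlash

variable (Q : QPrefix) (j : ℕ) (x : Var)

lemma length_removeSlash : (removeSlash Q j x).length = Q.length := by
  simp [removeSlash]

lemma getD_removeSlash (i : ℕ) :
    (removeSlash Q j x).getD i default =
      if i = j then ((Q.getD j default).1, (Q.getD j default).2.1,
        (Q.getD j default).2.2.erase x) else Q.getD i default := by
  rcases lt_or_ge i Q.length with hi | hi
  · rw [List.getD_eq_getElem _ _ (by simpa [length_removeSlash] using hi),
      List.getD_eq_getElem _ _ hi]
    unfold removeSlash
    rw [List.getElem_set]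
    by_cases hij : i = j
    · simp [hij]
    · simp [Ne.symm hij, hij]
  · rw [List.getD_eq_default _ _ (by simpa [length_removeSlash] using hi),
      List.getD_eq_default _ _ hi]
    split_ifs with hij
    · subst hij
      rw [List.getD_eq_default _ _ hi]
      rfl
    · rfl

lemma qUniv_removeSlash (i : ℕ) : qUniv (removeSlash Q j x) i ↔ qUniv Q i := by
  unfold qUniv
  rw [getD_removeSlash]
  split_ifs with hij <;> simp [hij]

lemma qslash_removeSlash_of_ne {i : ℕ} (hij : i ≠ j) :
    qslash (removeSlash Q j x) i = qslash Q i := by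
  unfold qslash
  rw [getD_removeSlash, if_neg hij]

lemma qslash_removeSlash_self : qslash (removeSlash Q j x) j = (qslash Q j).erase x := by
  unfold qslash
  rw [getD_removeSlash, if_pos rfl]

lemma map_removeSlash :
    (removeSlash Q j x).map (fun q => (q.1, q.2.1)) = Q.map (fun q => (q.1, q.2.1)) := by
  unfold removeSlash
  rw [List.map_set]
  rcases lt_or_ge j Q.length with hj | hj
  · have h := List.set_getElem_self (as := Q.map fun q => (q.1, q.2.1)) (by simpa using hj)
    rw [List.getElem_map] at h
    rwa [List.getD_eq_getElem _ _ hj]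
  · exact List.set_eq_of_length_le (by simpa using hj)

lemma varsBefore_removeSlash (i : ℕ) : varsBefore (removeSlash Q j x) i = varsBefore Q i := by
  have h := congrArg (List.map Prod.snd) (map_removeSlash Q j x)
  simp only [List.map_map, Function.comp_def] at h
  simp only [varsBefore, List.map_take, h]

lemma visible_removeSlash_of_ne {i : ℕ} (hij : i ≠ j) :
    visible (removeSlash Q j x) i = visible Q i := by
  rw [visible, visible, varsBefore_removeSlash, qslash_removeSlash_of_ne Q j x hij]

lemma visible_removeSlash_self_subset :
    visible (removeSlash Q j x) j ⊆ insert x (visible Q j) := by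
  intro v hv
  simp only [visible, varsBefore_removeSlash, qslash_removeSlash_self, Finset.mem_sdiff,
    Finset.mem_erase, Finset.mem_insert, not_and] at hv ⊢
  by_cases hvx : v = x
  · exact Or.inl hvx
  · exact Or.inr ⟨hv.1, fun h => hv.2 hvx h⟩

end RemoveSlash

lemma EAdmissible.of_removeSlash {M : Type*} {Q : QPrefix} {j : ℕ} {x : Var} {σ : Strat M}
    (hadm : EAdmissible (removeSlash Q j x) σ) {i : ℕ} (hij : i ≠ j) (hi : i < Q.length)
    (hE : ¬ qUniv Q i) (s t : Var → M) (hst : agreeOn s t (visible Q i)) : σ i s = σ i t :=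
  hadm i (by rwa [length_removeSlash]) (by rwa [qUniv_removeSlash])
    s t (by rwa [visible_removeSlash_of_ne Q j x hij])

section Play

variable {M : Type*} (σ τ : Strat M)

lemma outcome_append (l₁ l₂ : QPrefix) (i : ℕ) (s : Var → M) :
    outcome σ τ (l₁ ++ l₂) i s = outcome σ τ l₂ (i + l₁.length) (outcome σ τ l₁ i s) := by
  induction l₁ generalizing i s with
  | nil => rfl
  | cons q l ih =>
    simp only [List.cons_append, outcome, ih, List.length_cons]
    congr 1
    omega

lemma outcome_congr_prefix {l l' : QPrefix}
    (h : l.map (fun q => (q.1, q.2.1)) = l'.map (fun q => (q.1, q.2.1))) (i : ℕ)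
    (s : Var → M) : outcome σ τ l i s = outcome σ τ l' i s := by
  induction l generalizing l' i s with
  | nil => cases l' <;> simp_all [outcome]
  | cons q l ih =>
    cases l' with
    | nil => simp at h
    | cons q' l' =>
      simp only [List.map_cons, List.cons.injEq, Prod.mk.injEq] at h
      obtain ⟨⟨h1, h2⟩, hl⟩ := h
      simp only [outcome, h1, h2, ih hl]

lemma outcome_removeSlash (Q : QPrefix) (j : ℕ) (x : Var) (i : ℕ) (s : Var → M) :
    outcome σ τ (removeSlash Q j x) i s = outcome σ τ Q i s :=
  outcome_congr_prefix σ τ (map_removeSlash Q j x) i s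

/-- The assignment just before the move at position `n` (the final one for `n ≥ Q.length`). -/
def play (Q : QPrefix) (s₀ : Var → M) (n : ℕ) : Var → M :=
  outcome σ τ (Q.take n) 0 s₀

variable {σ τ} {Q : QPrefix} {s₀ : Var → M}

lemma play_zero : play σ τ Q s₀ 0 = s₀ := by
  simp [play, outcome]

lemma play_succ {n : ℕ} (hn : n < Q.length) :
    play σ τ Q s₀ (n + 1) = Function.update (play σ τ Q s₀ n) Q[n].2.1
      (if Q[n].1 then τ n (play σ τ Q s₀ n) else σ n (play σ τ Q s₀ n)) := by
  rw [play, List.take_add_one, List.getElem?_eq_getElem hn, Option.toList_some, outcome_append,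
    List.length_take, min_eq_left hn.le, Nat.zero_add]
  rfl

lemma outcome_eq_play_length : outcome σ τ Q 0 s₀ = play σ τ Q s₀ Q.length := by
  simp [play]

lemma play_agreeOn_varsBefore (hreg : (Q.map (fun q => q.2.1)).Nodup) {m n : ℕ} (hmn : m ≤ n)
    (hn : n ≤ Q.length) : agreeOn (play σ τ Q s₀ n) (play σ τ Q s₀ m) (varsBefore Q m) := by
  induction n, hmn using Nat.le_induction with
  | base => exact fun _ _ => rfl
  | succ n hmn ih =>
    intro v hv
    have hvn : v ≠ Q[n].2.1 := by
      rintro rfl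
      exact qvar_not_mem_varsBefore hreg hmn (by omega) (by rwa [qvar_eq_getElem])
    rw [play_succ (by omega), Function.update_of_ne hvn]
    exact ih (by omega) v hv

end Play

/-- The paper's `g_y`, with `iy` the position of `y` and `ix` that of `x`. -/
def Strat.composeAt {M : Type*} (σ : Strat M) (ix iy : ℕ) (x : Var) : Strat M :=
  fun i s => if i = iy then σ iy (Function.update s x (σ ix s)) else σ i s

theorem Strat.composeAt_eAdmissible {M : Type*} {Q : QPrefix} {ix iy : ℕ} {x : Var}
    {σ : Strat M} (hadm : EAdmissible (removeSlash Q iy x) σ) (hne : ix ≠ iy)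
    (hix : ix < Q.length) (hxE : ¬ qUniv Q ix) (hsub : visible Q ix ⊆ visible Q iy) :
    EAdmissible Q (σ.composeAt ix iy x) := by
  intro i hi hE s t hst
  unfold Strat.composeAt
  split_ifs with hiy
  · subst hiy
    have hx : σ ix s = σ ix t :=
      hadm.of_removeSlash hne hix hxE s t fun v hv => hst v (hsub hv)
    refine hadm i (by rwa [length_removeSlash]) (by rwa [qUniv_removeSlash]) _ _ fun v hv => ?_
    rcases Finset.mem_insert.mp (visible_removeSlash_self_subset Q i x hv) with rfl | hv
    · simp [hx]
    · by_cases hvx : v = x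
      · simp [hvx, hx]
      · simp [Function.update_of_ne hvx, hst v hv]
  · exact hadm i (by rwa [length_removeSlash]) (by rwa [qUniv_removeSlash]) s t
      (by rwa [visible_removeSlash_of_ne Q iy x hiy])

section Composite

variable {M : Type*} {σ τ : Strat M} {Q : QPrefix} {ix : ℕ} {x : Var} {s₀ : Var → M}

lemma play_apply_eq_choice (hreg : (Q.map (fun q => q.2.1)).Nodup) (hix : ix < Q.length)
    (hxE : ¬ qUniv Q ix) (hx : qvar Q ix = x)
    (hσx : ∀ s t, agreeOn s t (visible Q ix) → σ ix s = σ ix t)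
    {n : ℕ} (hn : ix < n) (hnQ : n ≤ Q.length) :
    σ ix (play σ τ Q s₀ n) = play σ τ Q s₀ n x := by
  have hagree := play_agreeOn_varsBefore (σ := σ) (τ := τ) (s₀ := s₀) hreg hn hnQ
  have hstep : play σ τ Q s₀ (ix + 1) =
      Function.update (play σ τ Q s₀ ix) x (σ ix (play σ τ Q s₀ ix)) := by
    rw [play_succ hix, ← qvar_eq_getElem hix, hx,
      if_neg (by rwa [qUniv_iff_getElem hix] at hxE)]
  have hvis : visible Q ix ⊆ varsBefore Q (ix + 1) :=
    Finset.sdiff_subset.trans (varsBefore_mono (Nat.le_succ ix))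
  have hxfresh : x ∉ visible Q ix := fun h =>
    qvar_not_mem_varsBefore hreg le_rfl hix (hx ▸ Finset.sdiff_subset h)
  calc σ ix (play σ τ Q s₀ n) = σ ix (play σ τ Q s₀ (ix + 1)) :=
        hσx _ _ fun v hv => hagree v (hvis hv)
    _ = σ ix (play σ τ Q s₀ ix) := hσx _ _ fun v hv => by
        rw [hstep, Function.update_of_ne (ne_of_mem_of_not_mem hv hxfresh)]
    _ = play σ τ Q s₀ (ix + 1) x := by rw [hstep, Function.update_self]
    _ = play σ τ Q s₀ n x := (hagree x (hx ▸ qvar_mem_varsBefore (Nat.lt_succ_self ix) hix)).symm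

theorem outcome_composeAt {iy : ℕ} (hreg : (Q.map (fun q => q.2.1)).Nodup) (hlt : ix < iy)
    (hix : ix < Q.length) (hxE : ¬ qUniv Q ix) (hx : qvar Q ix = x)
    (hσx : ∀ s t, agreeOn s t (visible Q ix) → σ ix s = σ ix t) :
    outcome (σ.composeAt ix iy x) τ Q 0 s₀ = outcome σ τ Q 0 s₀ := by
  suffices h : ∀ n ≤ Q.length, play (σ.composeAt ix iy x) τ Q s₀ n = play σ τ Q s₀ n by
    rw [outcome_eq_play_length, outcome_eq_play_length, h _ le_rfl]
  intro n hn
  induction n with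
  | zero => rw [play_zero, play_zero]
  | succ n ih =>
    have hchoice : σ.composeAt ix iy x n (play σ τ Q s₀ n) = σ n (play σ τ Q s₀ n) := by
      unfold Strat.composeAt
      split_ifs with hn'
      · subst hn'
        rw [play_apply_eq_choice hreg hix hxE hx hσx hlt (by omega), Function.update_eq_self]
      · rfl
    rw [play_succ (by omega), play_succ (by omega), ih (by omega), hchoice]

end Composite

/-- if every variable visible to `x` is visible to `y`
(the I∃∃ does not weakly break knowledge memory), then composing `y`'s
choice function with `x`'s choice function gives an admissible strategy for
`G(φ,M)` producing the same outcomes, so a winning strategy for Éloïse in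
`G(φ^{y←x},M)` induces one in `G(φ,M)`. -/
theorem stmt18 (Q : QPrefix) (ix iy : ℕ) (x : Var)
    (hreg : (Q.map (fun q => q.2.1)).Nodup)
    (hIEE : IEE Q ix iy) (hx : qvar Q ix = x)
    (hsub : visible Q ix ⊆ visible Q iy)
    (M : Type*) (I : ℕ → List M → Prop) (ψ : QF)
    (σ : Strat M) (hadm : EAdmissible (removeSlash Q iy x) σ) :
    EAdmissible Q
      (fun i s => if i = iy then σ iy (Function.update s x (σ ix s)) else σ i s) ∧
    (∀ τ : Strat M, ∀ s₀ : Var → M,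
      outcome (fun i s => if i = iy then σ iy (Function.update s x (σ ix s)) else σ i s)
          τ Q 0 s₀ =
        outcome σ τ (removeSlash Q iy x) 0 s₀) ∧
    ((∀ τ : Strat M, ∀ s₀ : Var → M,
        ψ.eval I (outcome σ τ (removeSlash Q iy x) 0 s₀)) →
      TrueIn M I Q ψ) := by
  obtain ⟨hlt, hylen, hxE, -, -⟩ := hIEE
  have hix : ix < Q.length := hlt.trans hylen
  have hadm' : EAdmissible Q (σ.composeAt ix iy x) :=
    Strat.composeAt_eAdmissible hadm hlt.ne hix hxE hsub
  have hout : ∀ τ s₀, outcome (σ.composeAt ix iy x) τ Q 0 s₀ =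
      outcome σ τ (removeSlash Q iy x) 0 s₀ := fun τ s₀ => by
    rw [outcome_removeSlash]
    exact outcome_composeAt hreg hlt hix hxE hx (hadm.of_removeSlash hlt.ne hix hxE)
  exact ⟨hadm', hout, fun hwin => ⟨_, hadm', fun τ s₀ => hout τ s₀ ▸ hwin τ s₀⟩⟩
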